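/- arXiv:2605.03584 — 3 statements merged into one kernel-verified Lean document; each statement's English description precedes it below -/
import Mathlib

section
/- Let M1, M2, N1, N2 be smooth manifolds and i1 : M1 → M2, j1 : M1 → N1, i2 : N1 → N2, j2 : M2 → N2 smooth immersions with j2 ∘ i1 = i2 ∘ j1. Then the following three conditions are equivalent: (N-j) for every m ∈ M1 and δ ∈ T_{i1(m)} M2, if (j2)_* δ lies in the range of (i2)_* then δ lies in the range of (i1)_*; (N-i) for every m ∈ M1 and γ ∈ T_{j1(m)} N1, if (i2)_* γ lies in the range of (j2)_* then γ lies in the range of (j1)_*; (E) for every m ∈ M1, δ ∈ T_{i1(m)} M2 and γ ∈ T_{j1(m)} N1 with (j2)_* δ = (i2)_* γ, there exists a unique ε ∈ T_m M1 with (i1)_* ε = δ and (j1)_* ε = γ. -/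
open Manifold Set

/-!
At each point `m`, the differentials form a commutative square of injective linear maps
`(j₂)_* ∘ (i₁)_* = (i₂)_* ∘ (j₁)_*`, and the three conditions are statements about this square
alone. (N-j) gives (E): if `(j₂)_* δ = (i₂)_* γ` and `δ = (i₁)_* ε`, then `(i₂)_* ((j₁)_* ε) = (i₂)_* γ`,
so `(j₁)_* ε = γ` by injectivity of `(i₂)_*`, and `ε` is unique by injectivity of `(i₁)_*`.
(E) gives (N-i) by forgetting the first component, and (N-i) gives (N-j) by the same argument
as the first step with the roles of the two sides exchanged.
-/

section CommSquare

variable {A B C D : Type*} {f : A → B} {g : A → C} {p : C → D} {q : B → D}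

theorem existsUnique_of_forall_mem_range (hcomm : ∀ a, q (f a) = p (g a))
    (hp : Function.Injective p) (hf : Function.Injective f)
    (h : ∀ b, q b ∈ range p → b ∈ range f) {b : B} {c : C} (hbc : q b = p c) :
    ∃! a, f a = b ∧ g a = c := by
  obtain ⟨a, rfl⟩ := h b ⟨c, hbc.symm⟩
  exact ⟨a, ⟨rfl, hp ((hcomm a).symm.trans hbc)⟩, fun a' ha' => hf ha'.1⟩

theorem mem_range_of_forall_mem_range (hcomm : ∀ a, q (f a) = p (g a))
    (hq : Function.Injective q) (h : ∀ c, p c ∈ range q → c ∈ range g)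
    {b : B} (hb : q b ∈ range p) : b ∈ range f := by
  obtain ⟨c, hcb⟩ := hb
  obtain ⟨a, rfl⟩ := h c ⟨b, hcb.symm⟩
  exact ⟨a, hq ((hcomm a).trans hcb)⟩

end CommSquare

section Manifold

variable {𝕜 : Type*} [NontriviallyNormedField 𝕜]
  {E₁ E₂ E₃ E₄ : Type*}
  [NormedAddCommGroup E₁] [NormedSpace 𝕜 E₁] [NormedAddCommGroup E₂] [NormedSpace 𝕜 E₂]
  [NormedAddCommGroup E₃] [NormedSpace 𝕜 E₃] [NormedAddCommGroup E₄] [NormedSpace 𝕜 E₄]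
  {H₁ H₂ H₃ H₄ : Type*}
  [TopologicalSpace H₁] [TopologicalSpace H₂] [TopologicalSpace H₃] [TopologicalSpace H₄]
  {I₁ : ModelWithCorners 𝕜 E₁ H₁} {I₂ : ModelWithCorners 𝕜 E₂ H₂}
  {I₃ : ModelWithCorners 𝕜 E₃ H₃} {I₄ : ModelWithCorners 𝕜 E₄ H₄}
  {M₁ M₂ N₁ N₂ : Type*}
  [TopologicalSpace M₁] [ChartedSpace H₁ M₁] [TopologicalSpace M₂] [ChartedSpace H₂ M₂]
  [TopologicalSpace N₁] [ChartedSpace H₃ N₁] [TopologicalSpace N₂] [ChartedSpace H₄ N₂]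
  {i₁ : M₁ → M₂} {j₁ : M₁ → N₁} {i₂ : N₁ → N₂} {j₂ : M₂ → N₂} {m : M₁}

theorem mfderiv_comp_apply_eq_of_comp_eq (hcomm : j₂ ∘ i₁ = i₂ ∘ j₁)
    (hi₁ : MDifferentiableAt I₁ I₂ i₁ m) (hj₁ : MDifferentiableAt I₁ I₃ j₁ m)
    (hi₂ : MDifferentiableAt I₃ I₄ i₂ (j₁ m)) (hj₂ : MDifferentiableAt I₂ I₄ j₂ (i₁ m))
    (v : TangentSpace I₁ m) :
    mfderiv I₂ I₄ j₂ (i₁ m) (mfderiv I₁ I₂ i₁ m v) =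
      mfderiv I₃ I₄ i₂ (j₁ m) (mfderiv I₁ I₃ j₁ m v) := by
  rw [← mfderiv_comp_apply m hj₂ hi₁, hcomm, mfderiv_comp_apply m hi₂ hj₁]

end Manifold

theorem stmt_0_general
    {E₁ E₂ E₃ E₄ : Type*}
    [NormedAddCommGroup E₁] [NormedSpace ℝ E₁]
    [NormedAddCommGroup E₂] [NormedSpace ℝ E₂]
    [NormedAddCommGroup E₃] [NormedSpace ℝ E₃]
    [NormedAddCommGroup E₄] [NormedSpace ℝ E₄]
    {H₁ H₂ H₃ H₄ : Type*}
    [TopologicalSpace H₁] [TopologicalSpace H₂] [TopologicalSpace H₃] [TopologicalSpace H₄]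
    {I₁ : ModelWithCorners ℝ E₁ H₁} {I₂ : ModelWithCorners ℝ E₂ H₂}
    {I₃ : ModelWithCorners ℝ E₃ H₃} {I₄ : ModelWithCorners ℝ E₄ H₄}
    {M₁ : Type*} [TopologicalSpace M₁] [ChartedSpace H₁ M₁]
    {M₂ : Type*} [TopologicalSpace M₂] [ChartedSpace H₂ M₂]
    {N₁ : Type*} [TopologicalSpace N₁] [ChartedSpace H₃ N₁]
    {N₂ : Type*} [TopologicalSpace N₂] [ChartedSpace H₄ N₂]
    (i₁ : M₁ → M₂) (j₁ : M₁ → N₁) (i₂ : N₁ → N₂) (j₂ : M₂ → N₂)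
    (hi₁ : ContMDiff I₁ I₂ (⊤ : ℕ∞) i₁) (hj₁ : ContMDiff I₁ I₃ (⊤ : ℕ∞) j₁)
    (hi₂ : ContMDiff I₃ I₄ (⊤ : ℕ∞) i₂) (hj₂ : ContMDiff I₂ I₄ (⊤ : ℕ∞) j₂)
    (hi₁imm : ∀ m, Function.Injective (mfderiv I₁ I₂ i₁ m))
    (hi₂imm : ∀ n, Function.Injective (mfderiv I₃ I₄ i₂ n))
    (hj₂imm : ∀ n, Function.Injective (mfderiv I₂ I₄ j₂ n))
    (hcomm : ∀ m, j₂ (i₁ m) = i₂ (j₁ m)) :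
    List.TFAE
      [ ∀ (m : M₁) (δ : TangentSpace I₂ (i₁ m)),
          mfderiv I₂ I₄ j₂ (i₁ m) δ ∈ Set.range (mfderiv I₃ I₄ i₂ (j₁ m)) →
          δ ∈ Set.range (mfderiv I₁ I₂ i₁ m),
        ∀ (m : M₁) (γ : TangentSpace I₃ (j₁ m)),
          mfderiv I₃ I₄ i₂ (j₁ m) γ ∈ Set.range (mfderiv I₂ I₄ j₂ (i₁ m)) →
          γ ∈ Set.range (mfderiv I₁ I₃ j₁ m),
        ∀ (m : M₁) (δ : TangentSpace I₂ (i₁ m)) (γ : TangentSpace I₃ (j₁ m)),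
          mfderiv I₂ I₄ j₂ (i₁ m) δ = mfderiv I₃ I₄ i₂ (j₁ m) γ →
          ∃! ε : TangentSpace I₁ m,
            mfderiv I₁ I₂ i₁ m ε = δ ∧ mfderiv I₁ I₃ j₁ m ε = γ ] := by
  have hsquare : ∀ m (ε : TangentSpace I₁ m),
      mfderiv I₂ I₄ j₂ (i₁ m) (mfderiv I₁ I₂ i₁ m ε) =
        mfderiv I₃ I₄ i₂ (j₁ m) (mfderiv I₁ I₃ j₁ m ε) := fun m =>
    mfderiv_comp_apply_eq_of_comp_eq (funext hcomm) (hi₁.mdifferentiableAt (by simp))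
      (hj₁.mdifferentiableAt (by simp)) (hi₂.mdifferentiableAt (by simp))
      (hj₂.mdifferentiableAt (by simp))
  tfae_have 1 → 3 := fun h m _ _ hδγ =>
    existsUnique_of_forall_mem_range (hsquare m) (hi₂imm _) (hi₁imm m) (h m) hδγ
  tfae_have 3 → 2 := fun h m γ ⟨δ, hδγ⟩ => (h m δ γ hδγ).exists.imp fun _ => And.right
  tfae_have 2 → 1 := fun h m _ =>
    mem_range_of_forall_mem_range (hsquare m) (hj₂imm _) (h m)
  tfae_finish

/-- Proposition `prop-2immer` of the paper: for a commutative square of smooth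
immersions `j₂ ∘ i₁ = i₂ ∘ j₁`, the fibrewise injectivity of the normal
differential `N(j₂,j₁)`, that of `N(i₂,i₁)`, and the exactness of
`TM₁ → TN₁ × TM₂ → TN₂` at the middle term are equivalent. -/
theorem stmt_0
    {E₁ E₂ E₃ E₄ : Type*}
    [NormedAddCommGroup E₁] [NormedSpace ℝ E₁] [FiniteDimensional ℝ E₁]
    [NormedAddCommGroup E₂] [NormedSpace ℝ E₂] [FiniteDimensional ℝ E₂]
    [NormedAddCommGroup E₃] [NormedSpace ℝ E₃] [FiniteDimensional ℝ E₃]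
    [NormedAddCommGroup E₄] [NormedSpace ℝ E₄] [FiniteDimensional ℝ E₄]
    {H₁ H₂ H₃ H₄ : Type*}
    [TopologicalSpace H₁] [TopologicalSpace H₂] [TopologicalSpace H₃] [TopologicalSpace H₄]
    {I₁ : ModelWithCorners ℝ E₁ H₁} {I₂ : ModelWithCorners ℝ E₂ H₂}
    {I₃ : ModelWithCorners ℝ E₃ H₃} {I₄ : ModelWithCorners ℝ E₄ H₄}
    [I₁.Boundaryless] [I₂.Boundaryless] [I₃.Boundaryless] [I₄.Boundaryless]
    {M₁ : Type*} [TopologicalSpace M₁] [ChartedSpace H₁ M₁] [IsManifold I₁ (⊤ : ℕ∞) M₁]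
    {M₂ : Type*} [TopologicalSpace M₂] [ChartedSpace H₂ M₂] [IsManifold I₂ (⊤ : ℕ∞) M₂]
    {N₁ : Type*} [TopologicalSpace N₁] [ChartedSpace H₃ N₁] [IsManifold I₃ (⊤ : ℕ∞) N₁]
    {N₂ : Type*} [TopologicalSpace N₂] [ChartedSpace H₄ N₂] [IsManifold I₄ (⊤ : ℕ∞) N₂]
    (i₁ : M₁ → M₂) (j₁ : M₁ → N₁) (i₂ : N₁ → N₂) (j₂ : M₂ → N₂)
    (hi₁ : ContMDiff I₁ I₂ (⊤ : ℕ∞) i₁) (hj₁ : ContMDiff I₁ I₃ (⊤ : ℕ∞) j₁)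
    (hi₂ : ContMDiff I₃ I₄ (⊤ : ℕ∞) i₂) (hj₂ : ContMDiff I₂ I₄ (⊤ : ℕ∞) j₂)
    (hi₁imm : ∀ m, Function.Injective (mfderiv I₁ I₂ i₁ m))
    (hj₁imm : ∀ m, Function.Injective (mfderiv I₁ I₃ j₁ m))
    (hi₂imm : ∀ n, Function.Injective (mfderiv I₃ I₄ i₂ n))
    (hj₂imm : ∀ n, Function.Injective (mfderiv I₂ I₄ j₂ n))
    (hcomm : ∀ m, j₂ (i₁ m) = i₂ (j₁ m)) :
    List.TFAE
      [ ∀ (m : M₁) (δ : TangentSpace I₂ (i₁ m)),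
          mfderiv I₂ I₄ j₂ (i₁ m) δ ∈ Set.range (mfderiv I₃ I₄ i₂ (j₁ m)) →
          δ ∈ Set.range (mfderiv I₁ I₂ i₁ m),
        ∀ (m : M₁) (γ : TangentSpace I₃ (j₁ m)),
          mfderiv I₃ I₄ i₂ (j₁ m) γ ∈ Set.range (mfderiv I₂ I₄ j₂ (i₁ m)) →
          γ ∈ Set.range (mfderiv I₁ I₃ j₁ m),
        ∀ (m : M₁) (δ : TangentSpace I₂ (i₁ m)) (γ : TangentSpace I₃ (j₁ m)),
          mfderiv I₂ I₄ j₂ (i₁ m) δ = mfderiv I₃ I₄ i₂ (j₁ m) γ →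
          ∃! ε : TangentSpace I₁ m,
            mfderiv I₁ I₂ i₁ m ε = δ ∧ mfderiv I₁ I₃ j₁ m ε = γ ] :=
  stmt_0_general i₁ j₁ i₂ j₂ hi₁ hj₁ hi₂ hj₂ hi₁imm hi₂imm hj₂imm hcomm
end

section
/- Let M1, M2, N1, N2 be smooth manifolds and i1 : M1 → M2, j1 : M1 → N1, i2 : N1 → N2, j2 : M2 → N2 smooth immersions with j2 ∘ i1 = i2 ∘ j1. Assume condition (N-j): for every m ∈ M1 and δ ∈ T_{i1(m)} M2, if (j2)_* δ lies in the range of (i2)_*, then δ lies in the range of (i1)_*. Then condition (E) holds: for every m ∈ M1, δ ∈ T_{i1(m)} M2 and γ ∈ T_{j1(m)} N1 with (j2)_* δ = (i2)_* γ, there exists a unique ε ∈ T_m M1 with (i1)_* ε = δ and (j1)_* ε = γ. -/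
open Manifold Set

/-! By the chain rule the differentials form a commutative square. Condition (N-j) lifts `δ` to
some `ε` with `(i₁)_* ε = δ`; then `(i₂)_* ((j₁)_* ε) = (j₂)_* δ = (i₂)_* γ`, so `(j₁)_* ε = γ` by
injectivity of `(i₂)_*`, and `ε` is unique by injectivity of `(i₁)_*`. Past the chain rule
this is a statement about plain maps of sets. -/

theorem Function.existsUnique_of_comm_of_preimage_range_subset {A B C D : Type*}
    {a : A → B} {b : A → C} {c : C → D} {d : B → D} (hcomm : ∀ x, d (a x) = c (b x))
    (ha : Function.Injective a) (hc : Function.Injective c)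
    (hrange : d ⁻¹' Set.range c ⊆ Set.range a)
    {δ : B} {γ : C} (h : d δ = c γ) :
    ∃! ε, a ε = δ ∧ b ε = γ := by
  obtain ⟨ε, hε⟩ := hrange ⟨γ, h.symm⟩
  have hbε : b ε = γ := hc <| by rw [← hcomm, hε, h]
  exact ⟨ε, ⟨hε, hbε⟩, fun ε' ⟨hε', _⟩ => ha (hε'.trans hε.symm)⟩

section CommSquare

variable {𝕜 : Type*} [NontriviallyNormedField 𝕜]
    {E₁ E₂ E₃ E₄ : Type*}
    [NormedAddCommGroup E₁] [NormedSpace 𝕜 E₁] [NormedAddCommGroup E₂] [NormedSpace 𝕜 E₂]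
    [NormedAddCommGroup E₃] [NormedSpace 𝕜 E₃] [NormedAddCommGroup E₄] [NormedSpace 𝕜 E₄]
    {H₁ H₂ H₃ H₄ : Type*}
    [TopologicalSpace H₁] [TopologicalSpace H₂] [TopologicalSpace H₃] [TopologicalSpace H₄]
    {I₁ : ModelWithCorners 𝕜 E₁ H₁} {I₂ : ModelWithCorners 𝕜 E₂ H₂}
    {I₃ : ModelWithCorners 𝕜 E₃ H₃} {I₄ : ModelWithCorners 𝕜 E₄ H₄}
    {M₁ : Type*} [TopologicalSpace M₁] [ChartedSpace H₁ M₁]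
    {M₂ : Type*} [TopologicalSpace M₂] [ChartedSpace H₂ M₂]
    {N₁ : Type*} [TopologicalSpace N₁] [ChartedSpace H₃ N₁]
    {N₂ : Type*} [TopologicalSpace N₂] [ChartedSpace H₄ N₂]
    {i₁ : M₁ → M₂} {j₁ : M₁ → N₁} {i₂ : N₁ → N₂} {j₂ : M₂ → N₂} {m : M₁}

theorem mfderiv_comp_eq_of_comp_eq
    (hi₁ : MDifferentiableAt I₁ I₂ i₁ m) (hj₁ : MDifferentiableAt I₁ I₃ j₁ m)
    (hi₂ : MDifferentiableAt I₃ I₄ i₂ (j₁ m)) (hj₂ : MDifferentiableAt I₂ I₄ j₂ (i₁ m))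
    (hcomm : j₂ ∘ i₁ = i₂ ∘ j₁) :
    (mfderiv I₂ I₄ j₂ (i₁ m)).comp (mfderiv I₁ I₂ i₁ m)
      = (mfderiv I₃ I₄ i₂ (j₁ m)).comp (mfderiv I₁ I₃ j₁ m) := by
  rw [← mfderiv_comp m hj₂ hi₁, ← mfderiv_comp m hi₂ hj₁, hcomm]

end CommSquare

theorem stmt_2_general
    {E₁ E₂ E₃ E₄ : Type*}
    [NormedAddCommGroup E₁] [NormedSpace ℝ E₁]
    [NormedAddCommGroup E₂] [NormedSpace ℝ E₂]
    [NormedAddCommGroup E₃] [NormedSpace ℝ E₃]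
    [NormedAddCommGroup E₄] [NormedSpace ℝ E₄]
    {H₁ H₂ H₃ H₄ : Type*}
    [TopologicalSpace H₁] [TopologicalSpace H₂] [TopologicalSpace H₃] [TopologicalSpace H₄]
    {I₁ : ModelWithCorners ℝ E₁ H₁} {I₂ : ModelWithCorners ℝ E₂ H₂}
    {I₃ : ModelWithCorners ℝ E₃ H₃} {I₄ : ModelWithCorners ℝ E₄ H₄}
    {M₁ : Type*} [TopologicalSpace M₁] [ChartedSpace H₁ M₁]
    {M₂ : Type*} [TopologicalSpace M₂] [ChartedSpace H₂ M₂]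
    {N₁ : Type*} [TopologicalSpace N₁] [ChartedSpace H₃ N₁]
    {N₂ : Type*} [TopologicalSpace N₂] [ChartedSpace H₄ N₂]
    (i₁ : M₁ → M₂) (j₁ : M₁ → N₁) (i₂ : N₁ → N₂) (j₂ : M₂ → N₂)
    (hi₁ : ContMDiff I₁ I₂ (⊤ : ℕ∞) i₁) (hj₁ : ContMDiff I₁ I₃ (⊤ : ℕ∞) j₁)
    (hi₂ : ContMDiff I₃ I₄ (⊤ : ℕ∞) i₂) (hj₂ : ContMDiff I₂ I₄ (⊤ : ℕ∞) j₂)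
    (hi₁imm : ∀ m, Function.Injective (mfderiv I₁ I₂ i₁ m))
    (hi₂imm : ∀ n, Function.Injective (mfderiv I₃ I₄ i₂ n))
    (hcomm : ∀ m, j₂ (i₁ m) = i₂ (j₁ m))
    (hNj : ∀ (m : M₁) (δ : TangentSpace I₂ (i₁ m)),
        mfderiv I₂ I₄ j₂ (i₁ m) δ ∈ Set.range (mfderiv I₃ I₄ i₂ (j₁ m)) →
        δ ∈ Set.range (mfderiv I₁ I₂ i₁ m)) :
    ∀ (m : M₁) (δ : TangentSpace I₂ (i₁ m)) (γ : TangentSpace I₃ (j₁ m)),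
      mfderiv I₂ I₄ j₂ (i₁ m) δ = mfderiv I₃ I₄ i₂ (j₁ m) γ →
      ∃! ε : TangentSpace I₁ m,
        mfderiv I₁ I₂ i₁ m ε = δ ∧ mfderiv I₁ I₃ j₁ m ε = γ := by
  intro m δ γ h
  have htangent := mfderiv_comp_eq_of_comp_eq (m := m) (hi₁.mdifferentiableAt (by simp))
    (hj₁.mdifferentiableAt (by simp)) (hi₂.mdifferentiableAt (by simp))
    (hj₂.mdifferentiableAt (by simp)) (funext hcomm)
  exact Function.existsUnique_of_comm_of_preimage_range_subset (b := mfderiv I₁ I₃ j₁ m)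
    (d := mfderiv I₂ I₄ j₂ (i₁ m)) (DFunLike.congr_fun htangent) (hi₁imm m) (hi₂imm (j₁ m))
    (hNj m) h

/-- Implication (1) ⇒ (3) in Proposition `prop-2immer`: fibrewise injectivity of
the normal differential `N(j₂,j₁)` implies exactness of the tangent sequence. -/
theorem stmt_2
    {E₁ E₂ E₃ E₄ : Type*}
    [NormedAddCommGroup E₁] [NormedSpace ℝ E₁] [FiniteDimensional ℝ E₁]
    [NormedAddCommGroup E₂] [NormedSpace ℝ E₂] [FiniteDimensional ℝ E₂]
    [NormedAddCommGroup E₃] [NormedSpace ℝ E₃] [FiniteDimensional ℝ E₃]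
    [NormedAddCommGroup E₄] [NormedSpace ℝ E₄] [FiniteDimensional ℝ E₄]
    {H₁ H₂ H₃ H₄ : Type*}
    [TopologicalSpace H₁] [TopologicalSpace H₂] [TopologicalSpace H₃] [TopologicalSpace H₄]
    {I₁ : ModelWithCorners ℝ E₁ H₁} {I₂ : ModelWithCorners ℝ E₂ H₂}
    {I₃ : ModelWithCorners ℝ E₃ H₃} {I₄ : ModelWithCorners ℝ E₄ H₄}
    [I₁.Boundaryless] [I₂.Boundaryless] [I₃.Boundaryless] [I₄.Boundaryless]
    {M₁ : Type*} [TopologicalSpace M₁] [ChartedSpace H₁ M₁] [IsManifold I₁ (⊤ : ℕ∞) M₁]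
    {M₂ : Type*} [TopologicalSpace M₂] [ChartedSpace H₂ M₂] [IsManifold I₂ (⊤ : ℕ∞) M₂]
    {N₁ : Type*} [TopologicalSpace N₁] [ChartedSpace H₃ N₁] [IsManifold I₃ (⊤ : ℕ∞) N₁]
    {N₂ : Type*} [TopologicalSpace N₂] [ChartedSpace H₄ N₂] [IsManifold I₄ (⊤ : ℕ∞) N₂]
    (i₁ : M₁ → M₂) (j₁ : M₁ → N₁) (i₂ : N₁ → N₂) (j₂ : M₂ → N₂)
    (hi₁ : ContMDiff I₁ I₂ (⊤ : ℕ∞) i₁) (hj₁ : ContMDiff I₁ I₃ (⊤ : ℕ∞) j₁)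
    (hi₂ : ContMDiff I₃ I₄ (⊤ : ℕ∞) i₂) (hj₂ : ContMDiff I₂ I₄ (⊤ : ℕ∞) j₂)
    (hi₁imm : ∀ m, Function.Injective (mfderiv I₁ I₂ i₁ m))
    (hj₁imm : ∀ m, Function.Injective (mfderiv I₁ I₃ j₁ m))
    (hi₂imm : ∀ n, Function.Injective (mfderiv I₃ I₄ i₂ n))
    (hj₂imm : ∀ n, Function.Injective (mfderiv I₂ I₄ j₂ n))
    (hcomm : ∀ m, j₂ (i₁ m) = i₂ (j₁ m))
    (hNj : ∀ (m : M₁) (δ : TangentSpace I₂ (i₁ m)),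
        mfderiv I₂ I₄ j₂ (i₁ m) δ ∈ Set.range (mfderiv I₃ I₄ i₂ (j₁ m)) →
        δ ∈ Set.range (mfderiv I₁ I₂ i₁ m)) :
    ∀ (m : M₁) (δ : TangentSpace I₂ (i₁ m)) (γ : TangentSpace I₃ (j₁ m)),
      mfderiv I₂ I₄ j₂ (i₁ m) δ = mfderiv I₃ I₄ i₂ (j₁ m) γ →
      ∃! ε : TangentSpace I₁ m,
        mfderiv I₁ I₂ i₁ m ε = δ ∧ mfderiv I₁ I₃ j₁ m ε = γ :=
  stmt_2_general i₁ j₁ i₂ j₂ hi₁ hj₁ hi₂ hj₂ hi₁imm hi₂imm hcomm hNj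
end

section
/- Let M1, M2, N1, N2 be smooth manifolds and i1 : M1 → M2, j1 : M1 → N1, i2 : N1 → N2, j2 : M2 → N2 smooth immersions with j2 ∘ i1 = i2 ∘ j1. Then condition (N-j) holds if and only if condition (N-i) holds, where (N-j): for every m ∈ M1 and δ ∈ T_{i1(m)} M2, if (j2)_* δ lies in the range of (i2)_* then δ lies in the range of (i1)_*; and (N-i): for every m ∈ M1 and γ ∈ T_{j1(m)} N1, if (i2)_* γ lies in the range of (j2)_* then γ lies in the range of (j1)_*. -/
open Manifold Set Function

section CommSquare

variable {α β γ δ : Type*} {a : α → β} {b : α → γ} {c : γ → δ} {d : β → δ}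

theorem mem_range_of_comp_eq_comp (hcomm : d ∘ a = c ∘ b) (hc : Injective c)
    (h : ∀ y, d y ∈ range c → y ∈ range a) {x : γ} (hx : c x ∈ range d) : x ∈ range b := by
  obtain ⟨y, hy⟩ := hx
  obtain ⟨v, rfl⟩ := h y ⟨x, hy.symm⟩
  exact ⟨v, hc (by rw [← hy, ← comp_apply (f := c), ← hcomm, comp_apply])⟩

/-- Read linearly, the two sides say that the maps `coker a → coker c` induced by `d` and
`coker b → coker d` induced by `c` are injective. -/
theorem forall_mem_range_iff_of_comp_eq_comp (hcomm : d ∘ a = c ∘ b) (hc : Injective c)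
    (hd : Injective d) :
    (∀ y, d y ∈ range c → y ∈ range a) ↔ (∀ x, c x ∈ range d → x ∈ range b) :=
  ⟨fun h _ ↦ mem_range_of_comp_eq_comp hcomm hc h,
    fun h _ ↦ mem_range_of_comp_eq_comp hcomm.symm hd h⟩

end CommSquare

theorem mfderiv_comp_eq_mfderiv_comp
    {𝕜 : Type*} [NontriviallyNormedField 𝕜]
    {E₁ E₂ E₃ E₄ : Type*}
    [NormedAddCommGroup E₁] [NormedSpace 𝕜 E₁] [NormedAddCommGroup E₂] [NormedSpace 𝕜 E₂]
    [NormedAddCommGroup E₃] [NormedSpace 𝕜 E₃] [NormedAddCommGroup E₄] [NormedSpace 𝕜 E₄]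
    {H₁ H₂ H₃ H₄ : Type*}
    [TopologicalSpace H₁] [TopologicalSpace H₂] [TopologicalSpace H₃] [TopologicalSpace H₄]
    {I₁ : ModelWithCorners 𝕜 E₁ H₁} {I₂ : ModelWithCorners 𝕜 E₂ H₂}
    {I₃ : ModelWithCorners 𝕜 E₃ H₃} {I₄ : ModelWithCorners 𝕜 E₄ H₄}
    {M₁ M₂ N₁ N₂ : Type*} [TopologicalSpace M₁] [ChartedSpace H₁ M₁]
    [TopologicalSpace M₂] [ChartedSpace H₂ M₂] [TopologicalSpace N₁] [ChartedSpace H₃ N₁]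
    [TopologicalSpace N₂] [ChartedSpace H₄ N₂]
    {i₁ : M₁ → M₂} {j₁ : M₁ → N₁} {i₂ : N₁ → N₂} {j₂ : M₂ → N₂} {m : M₁}
    (hi₁ : MDifferentiableAt I₁ I₂ i₁ m) (hj₁ : MDifferentiableAt I₁ I₃ j₁ m)
    (hi₂ : MDifferentiableAt I₃ I₄ i₂ (j₁ m)) (hj₂ : MDifferentiableAt I₂ I₄ j₂ (i₁ m))
    (hcomm : j₂ ∘ i₁ = i₂ ∘ j₁) :
    mfderiv I₂ I₄ j₂ (i₁ m) ∘ mfderiv I₁ I₂ i₁ m = mfderiv I₃ I₄ i₂ (j₁ m) ∘ mfderiv I₁ I₃ j₁ m := by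
  have h := mfderiv_comp m hj₂ hi₁
  rw [hcomm, mfderiv_comp m hi₂ hj₁] at h
  exact congrArg DFunLike.coe h.symm

theorem stmt_3_general
    {E₁ E₂ E₃ E₄ : Type*}
    [NormedAddCommGroup E₁] [NormedSpace ℝ E₁]
    [NormedAddCommGroup E₂] [NormedSpace ℝ E₂]
    [NormedAddCommGroup E₃] [NormedSpace ℝ E₃]
    [NormedAddCommGroup E₄] [NormedSpace ℝ E₄]
    {H₁ H₂ H₃ H₄ : Type*}
    [TopologicalSpace H₁] [TopologicalSpace H₂] [TopologicalSpace H₃] [TopologicalSpace H₄]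
    {I₁ : ModelWithCorners ℝ E₁ H₁} {I₂ : ModelWithCorners ℝ E₂ H₂}
    {I₃ : ModelWithCorners ℝ E₃ H₃} {I₄ : ModelWithCorners ℝ E₄ H₄}
    {M₁ : Type*} [TopologicalSpace M₁] [ChartedSpace H₁ M₁]
    {M₂ : Type*} [TopologicalSpace M₂] [ChartedSpace H₂ M₂]
    {N₁ : Type*} [TopologicalSpace N₁] [ChartedSpace H₃ N₁]
    {N₂ : Type*} [TopologicalSpace N₂] [ChartedSpace H₄ N₂]
    (i₁ : M₁ → M₂) (j₁ : M₁ → N₁) (i₂ : N₁ → N₂) (j₂ : M₂ → N₂)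
    (hi₁ : ContMDiff I₁ I₂ (⊤ : ℕ∞) i₁) (hj₁ : ContMDiff I₁ I₃ (⊤ : ℕ∞) j₁)
    (hi₂ : ContMDiff I₃ I₄ (⊤ : ℕ∞) i₂) (hj₂ : ContMDiff I₂ I₄ (⊤ : ℕ∞) j₂)
    (hi₂imm : ∀ n, Function.Injective (mfderiv I₃ I₄ i₂ n))
    (hj₂imm : ∀ n, Function.Injective (mfderiv I₂ I₄ j₂ n))
    (hcomm : ∀ m, j₂ (i₁ m) = i₂ (j₁ m))
    :
    (∀ (m : M₁) (δ : TangentSpace I₂ (i₁ m)),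
        mfderiv I₂ I₄ j₂ (i₁ m) δ ∈ Set.range (mfderiv I₃ I₄ i₂ (j₁ m)) →
        δ ∈ Set.range (mfderiv I₁ I₂ i₁ m)) ↔
    (∀ (m : M₁) (γ : TangentSpace I₃ (j₁ m)),
        mfderiv I₃ I₄ i₂ (j₁ m) γ ∈ Set.range (mfderiv I₂ I₄ j₂ (i₁ m)) →
        γ ∈ Set.range (mfderiv I₁ I₃ j₁ m)) :=
  forall_congr' fun m ↦ forall_mem_range_iff_of_comp_eq_comp
    (mfderiv_comp_eq_mfderiv_comp (hi₁.mdifferentiableAt (by simp))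
      (hj₁.mdifferentiableAt (by simp)) (hi₂.mdifferentiableAt (by simp))
      (hj₂.mdifferentiableAt (by simp)) (funext hcomm))
    (hi₂imm _) (hj₂imm _)

/-- Equivalence (1) ⇔ (2) of Proposition `prop-2immer`: the normal differential
`N(j₂,j₁)` is fibrewise injective iff `N(i₂,i₁)` is. -/
theorem stmt_3
    {E₁ E₂ E₃ E₄ : Type*}
    [NormedAddCommGroup E₁] [NormedSpace ℝ E₁] [FiniteDimensional ℝ E₁]
    [NormedAddCommGroup E₂] [NormedSpace ℝ E₂] [FiniteDimensional ℝ E₂]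
    [NormedAddCommGroup E₃] [NormedSpace ℝ E₃] [FiniteDimensional ℝ E₃]
    [NormedAddCommGroup E₄] [NormedSpace ℝ E₄] [FiniteDimensional ℝ E₄]
    {H₁ H₂ H₃ H₄ : Type*}
    [TopologicalSpace H₁] [TopologicalSpace H₂] [TopologicalSpace H₃] [TopologicalSpace H₄]
    {I₁ : ModelWithCorners ℝ E₁ H₁} {I₂ : ModelWithCorners ℝ E₂ H₂}
    {I₃ : ModelWithCorners ℝ E₃ H₃} {I₄ : ModelWithCorners ℝ E₄ H₄}
    [I₁.Boundaryless] [I₂.Boundaryless] [I₃.Boundaryless] [I₄.Boundaryless]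
    {M₁ : Type*} [TopologicalSpace M₁] [ChartedSpace H₁ M₁] [IsManifold I₁ (⊤ : ℕ∞) M₁]
    {M₂ : Type*} [TopologicalSpace M₂] [ChartedSpace H₂ M₂] [IsManifold I₂ (⊤ : ℕ∞) M₂]
    {N₁ : Type*} [TopologicalSpace N₁] [ChartedSpace H₃ N₁] [IsManifold I₃ (⊤ : ℕ∞) N₁]
    {N₂ : Type*} [TopologicalSpace N₂] [ChartedSpace H₄ N₂] [IsManifold I₄ (⊤ : ℕ∞) N₂]
    (i₁ : M₁ → M₂) (j₁ : M₁ → N₁) (i₂ : N₁ → N₂) (j₂ : M₂ → N₂)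
    (hi₁ : ContMDiff I₁ I₂ (⊤ : ℕ∞) i₁) (hj₁ : ContMDiff I₁ I₃ (⊤ : ℕ∞) j₁)
    (hi₂ : ContMDiff I₃ I₄ (⊤ : ℕ∞) i₂) (hj₂ : ContMDiff I₂ I₄ (⊤ : ℕ∞) j₂)
    (hi₁imm : ∀ m, Function.Injective (mfderiv I₁ I₂ i₁ m))
    (hj₁imm : ∀ m, Function.Injective (mfderiv I₁ I₃ j₁ m))
    (hi₂imm : ∀ n, Function.Injective (mfderiv I₃ I₄ i₂ n))
    (hj₂imm : ∀ n, Function.Injective (mfderiv I₂ I₄ j₂ n))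
    (hcomm : ∀ m, j₂ (i₁ m) = i₂ (j₁ m))
    :
    (∀ (m : M₁) (δ : TangentSpace I₂ (i₁ m)),
        mfderiv I₂ I₄ j₂ (i₁ m) δ ∈ Set.range (mfderiv I₃ I₄ i₂ (j₁ m)) →
        δ ∈ Set.range (mfderiv I₁ I₂ i₁ m)) ↔
    (∀ (m : M₁) (γ : TangentSpace I₃ (j₁ m)),
        mfderiv I₃ I₄ i₂ (j₁ m) γ ∈ Set.range (mfderiv I₂ I₄ j₂ (i₁ m)) →
        γ ∈ Set.range (mfderiv I₁ I₃ j₁ m)) :=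
  stmt_3_general i₁ j₁ i₂ j₂ hi₁ hj₁ hi₂ hj₂ hi₂imm hj₂imm hcomm
end
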